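/- arXiv:2302.07600 — 2 statements merged into one kernel-verified Lean document; each statement's English description precedes it below -/
import Mathlib

section
/- Consider points on a circle (angles in [0,2π)) forming a rotationally asymmetric configuration with no multiplicity, with true leader L (the point with lexicographically smallest clockwise gap sequence). If a new point p is inserted at an empty location and the resulting configuration is still rotationally asymmetric, then the true leader of the new configuration lies on the closed clockwise arc from L to p. -/
open Real

/-- Normalize a real number into `[0, 2π)` (representing an angle on the circle). -/
noncomputable def norm2pi (x : ℝ) : ℝ := (2 * π) * Int.fract (x / (2 * π))

/-- Clockwise angular distance from `a` to `b`, in `[0, 2π)`. -/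
noncomputable def cwAngle (a b : ℝ) : ℝ := norm2pi (b - a)

/-- A configuration: a finite set of angles, all lying in `[0, 2π)`. -/
def OnCircle (s : Finset ℝ) : Prop := ∀ x ∈ s, 0 ≤ x ∧ x < 2 * π

/-- Rotation of a configuration by angle `θ`. -/
noncomputable def rotConf (s : Finset ℝ) (θ : ℝ) : Finset ℝ :=
  s.image (fun x => norm2pi (x + θ))

/-- Rotational asymmetry: no nontrivial rotation preserves the configuration. -/
def RotAsym (s : Finset ℝ) : Prop := ∀ θ ∈ Set.Ioo 0 (2 * π), rotConf s θ ≠ s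

/-- The clockwise gap (angle) sequence of the point `r` in configuration `s`:
consecutive clockwise angular gaps starting at `r`. -/
noncomputable def angleSeq (s : Finset ℝ) (r : ℝ) : List ℝ :=
  let l := ((s.erase r).image (fun x => cwAngle r x)).sort (· ≤ ·)
  List.zipWith (fun u v => u - v) (l ++ [2 * π]) (0 :: l)

/-- Strict lexicographic order on lists of reals. -/
def ListLexLt (l₁ l₂ : List ℝ) : Prop := List.Lex (· < ·) l₁ l₂

/-- `r` is the true leader of `s`: its angle sequence is lexicographically strictly
smaller than that of every other point. -/
def IsTrueLeader (s : Finset ℝ) (r : ℝ) : Prop :=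
  r ∈ s ∧ ∀ x ∈ s, x ≠ r → ListLexLt (angleSeq s r) (angleSeq s x)

/-- The antipodal position of a point `r`. -/
noncomputable def antip (r : ℝ) : ℝ := norm2pi (r + π)

/-- The configuration as seen from `r` assuming its antipodal position is empty. -/
noncomputable def confC0 (s : Finset ℝ) (r : ℝ) : Finset ℝ := s.erase (antip r)

/-- The configuration as seen from `r` assuming its antipodal position is occupied. -/
noncomputable def confC1 (s : Finset ℝ) (r : ℝ) : Finset ℝ := insert (antip r) s

/-- A confused leader: both possibilities `C₀(r)` and `C₁(r)` are rotationally
asymmetric, and `r` is the true leader in exactly one of them. -/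
def ConfusedLeader (s : Finset ℝ) (r : ℝ) : Prop :=
  r ∈ s ∧ RotAsym (confC0 s r) ∧ RotAsym (confC1 s r) ∧
    Xor' (IsTrueLeader (confC0 s r) r) (IsTrueLeader (confC1 s r) r)

/-- A sure leader: `r` is the true leader in every possible (rotationally
asymmetric) configuration among `C₀(r)`, `C₁(r)`. -/
def SureLeader (s : Finset ℝ) (r : ℝ) : Prop :=
  r ∈ s ∧ (RotAsym (confC0 s r) → IsTrueLeader (confC0 s r) r) ∧
    (RotAsym (confC1 s r) → IsTrueLeader (confC1 s r) r)

/-- An expected leader is a sure leader or a confused leader. -/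
def ExpectedLeader (s : Finset ℝ) (r : ℝ) : Prop := SureLeader s r ∨ ConfusedLeader s r

/-- `r'` is the first clockwise neighbor of `r` in `s`. -/
def IsCwNeighbor (s : Finset ℝ) (r r' : ℝ) : Prop :=
  r' ∈ s ∧ r' ≠ r ∧ ∀ x ∈ s, x ≠ r → cwAngle r r' ≤ cwAngle r x


/-!
Write `cwDists s r` for the increasing list of clockwise distances from `r` to the other points
of `s`; the angle sequence of `r` is its list of successive differences, so a lexicographically
smaller angle sequence means a lexicographically smaller `cwDists`. Suppose the new leader `L'`
lies strictly beyond `p` as seen from `L`. Inserting `p` inserts `cwAngle L p` into `cwDists s L`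
and `cwAngle L' p` into `cwDists s L'`. Every point of `s` met before `p` when walking clockwise
from `L` is also met before `p` when walking from `L'`, and so is `L` itself; hence `p` is inserted
strictly earlier into the first list, which keeps `cwDists s L < cwDists s L'` after insertion.
This contradicts the leadership of `L'`.
-/

open Finset

lemma cwAngle_eq_toIcoMod (a b : ℝ) : cwAngle a b = toIcoMod two_pi_pos 0 (b - a) := by
  rw [cwAngle, norm2pi, toIcoMod_eq_fract_mul, mul_comm]

lemma cwAngle_mem_Ico (a b : ℝ) : cwAngle a b ∈ Set.Ico 0 (2 * π) := by
  simpa [cwAngle_eq_toIcoMod] using toIcoMod_mem_Ico' two_pi_pos (b - a)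

lemma cwAngle_self (a : ℝ) : cwAngle a a = 0 := by
  simp [cwAngle, norm2pi]

lemma cwAngle_injOn (a : ℝ) : Set.InjOn (cwAngle a) (Set.Ico 0 (2 * π)) := by
  intro x hx y hy h
  rw [cwAngle_eq_toIcoMod, cwAngle_eq_toIcoMod, toIcoMod_inj] at h
  have hx' : toIcoMod two_pi_pos 0 x = x := (toIcoMod_eq_self _).2 (by simpa using hx)
  have hy' : toIcoMod two_pi_pos 0 y = y := (toIcoMod_eq_self _).2 (by simpa using hy)
  rw [← hx', ← hy', toIcoMod_inj]
  exact h.sub_right_cancel' a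

lemma cwAngle_eq_of_lt {a b x : ℝ} (h : cwAngle a x < cwAngle a b) :
    cwAngle b x = cwAngle a x + (2 * π - cwAngle a b) := by
  obtain ⟨-, k, hk⟩ := (toIcoMod_eq_iff two_pi_pos).1 (cwAngle_eq_toIcoMod a x).symm
  obtain ⟨-, m, hm⟩ := (toIcoMod_eq_iff two_pi_pos).1 (cwAngle_eq_toIcoMod a b).symm
  obtain ⟨hx0, -⟩ := cwAngle_mem_Ico a x
  obtain ⟨-, hb2⟩ := cwAngle_mem_Ico a b
  rw [cwAngle_eq_toIcoMod, toIcoMod_eq_iff]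
  refine ⟨⟨by linarith, by linarith⟩, k - m - 1, ?_⟩
  simp only [zsmul_eq_mul, Int.cast_sub, Int.cast_one] at hk hm ⊢
  linarith

section Lex

variable {α : Type*}

lemma lt_of_zipWith_sub_lt [AddCommGroup α] [LinearOrder α] [IsOrderedAddMonoid α] {T : α} :
    ∀ {l₁ l₂ : List α} {c : α}, l₁.length = l₂.length →
      List.zipWith (· - ·) (l₁ ++ [T]) (c :: l₁) < List.zipWith (· - ·) (l₂ ++ [T]) (c :: l₂) →
      l₁ < l₂
  | [], [], _, _, h => absurd h (lt_irrefl _)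
  | x :: l₁, y :: l₂, c, hlen, h => by
    simp only [List.cons_append, List.zipWith_cons_cons, List.cons_lt_cons_iff,
      sub_lt_sub_iff_right, sub_left_inj] at h
    rcases h with hxy | ⟨rfl, h⟩
    · exact .rel hxy
    · exact .cons (lt_of_zipWith_sub_lt (by simpa using hlen) h)

/-- `A.countP (· < a)` is the position at which `a` is inserted into the sorted list `A`. -/
lemma orderedInsert_lt_orderedInsert_of_countP_lt [LinearOrder α] {a b : α} :
    ∀ {A B : List α}, B.Pairwise (· ≤ ·) → A.length = B.length → A < B →
      A.countP (· < a) < B.countP (· < b) → a ∉ A →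
      A.orderedInsert (· ≤ ·) a < B.orderedInsert (· ≤ ·) b
  | [], [], _, _, _, hcount, _ => by simp at hcount
  | x :: A, y :: B, hB, hlen, hAB, hcount, ha => by
    have hyb : y < b := by
      obtain ⟨z, hz, hzb⟩ := List.countP_pos_iff.1 (Nat.zero_lt_of_lt hcount)
      rcases List.mem_cons.1 hz with rfl | hz
      · simpa using hzb
      · exact lt_of_le_of_lt (List.rel_of_pairwise_cons hB hz) (by simpa using hzb)
    have hxy : x ≤ y := List.head_le_of_lt hAB
    rw [List.orderedInsert_cons, List.orderedInsert_cons, if_neg (not_le.2 hyb)]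
    split_ifs with hax
    · exact .rel (lt_of_lt_of_le (lt_of_le_of_ne hax (by rintro rfl; simp at ha)) hxy)
    rcases List.cons_lt_cons_iff.1 hAB with hxy | ⟨rfl, hAB'⟩
    · exact .rel hxy
    · refine .cons (orderedInsert_lt_orderedInsert_of_countP_lt hB.of_cons
        (by simpa using hlen) hAB' ?_ fun h => ha (List.mem_cons_of_mem _ h))
      simp only [List.countP_cons, not_le.1 hax, hyb, decide_true] at hcount
      omega

end Lex

noncomputable def cwDists (s : Finset ℝ) (r : ℝ) : List ℝ :=
  ((s.erase r).image (cwAngle r)).sort (· ≤ ·)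

lemma angleSeq_eq_zipWith_cwDists (s : Finset ℝ) (r : ℝ) :
    angleSeq s r = List.zipWith (· - ·) (cwDists s r ++ [2 * π]) (0 :: cwDists s r) := rfl

lemma pairwise_cwDists (s : Finset ℝ) (r : ℝ) : (cwDists s r).Pairwise (· ≤ ·) :=
  Finset.pairwise_sort _ _

section Configuration

variable {s : Finset ℝ} {p : ℝ}

lemma OnCircle.injOn_cwAngle (hs : OnCircle s) (r : ℝ) : Set.InjOn (cwAngle r) s :=
  (cwAngle_injOn r).mono fun x hx => hs x hx

lemma length_cwDists (hs : OnCircle s) {r : ℝ} (hr : r ∈ s) : (cwDists s r).length = #s - 1 := by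
  rw [cwDists, Finset.length_sort, card_image_of_injOn ((hs.injOn_cwAngle r).mono (by simp)),
    card_erase_of_mem hr]

lemma countP_cwDists_lt (hs : OnCircle s) (r a : ℝ) :
    (cwDists s r).countP (· < a) = #{x ∈ s.erase r | cwAngle r x < a} := by
  rw [cwDists, ← Multiset.coe_countP, Finset.sort_eq,
    image_val_of_injOn ((hs.injOn_cwAngle r).mono (by simp)), Multiset.countP_map]
  rfl

lemma lt_cwDists_of_isTrueLeader (hs : OnCircle s) {L x : ℝ} (hL : IsTrueLeader s L)
    (hx : x ∈ s) (hxL : x ≠ L) : cwDists s L < cwDists s x := by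
  have hlt := hL.2 x hx hxL
  rw [ListLexLt, angleSeq_eq_zipWith_cwDists, angleSeq_eq_zipWith_cwDists] at hlt
  exact lt_of_zipWith_sub_lt (by rw [length_cwDists hs hL.1, length_cwDists hs hx]) hlt

lemma cwAngle_notMem_cwDists (hs : OnCircle (insert p s)) (hp : p ∉ s) (r : ℝ) :
    cwAngle r p ∉ cwDists s r := by
  rw [cwDists, Finset.mem_sort, mem_image]
  rintro ⟨x, hx, hxp⟩
  have hxs : x ∈ s := mem_of_mem_erase hx
  exact hp (hs.injOn_cwAngle r (mem_insert_of_mem hxs) (mem_insert_self p s) hxp ▸ hxs)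

lemma cwDists_insert (hs : OnCircle (insert p s)) (hp : p ∉ s) {r : ℝ} (hr : r ∈ s) :
    cwDists (insert p s) r = (cwDists s r).orderedInsert (· ≤ ·) (cwAngle r p) := by
  have hpr : p ≠ r := by rintro rfl; exact hp hr
  have hnotMem : cwAngle r p ∉ (s.erase r).image (cwAngle r) := by
    simpa [cwDists] using cwAngle_notMem_cwDists hs hp r
  have hperm : (cwDists (insert p s) r).Perm (cwAngle r p :: cwDists s r) := by
    rw [← Multiset.coe_eq_coe, ← Multiset.cons_coe, cwDists, cwDists, sort_eq, sort_eq,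
      erase_insert_of_ne hpr, image_insert, insert_val_of_notMem hnotMem]
  exact List.Perm.eq_of_pairwise' (pairwise_cwDists _ _)
    ((pairwise_cwDists s r).orderedInsert _ _) (hperm.trans (List.perm_orderedInsert _ _ _).symm)

end Configuration

lemma card_filter_cwAngle_lt_lt {s : Finset ℝ} {L L' p : ℝ} (hL : L ∈ s)
    (hLp : 0 < cwAngle L p) (hpL' : cwAngle L p < cwAngle L L') :
    #{x ∈ s.erase L | cwAngle L x < cwAngle L p} <
      #{x ∈ s.erase L' | cwAngle L' x < cwAngle L' p} := by
  have hshift := cwAngle_eq_of_lt hpL'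
  have hsub : {x ∈ s.erase L | cwAngle L x < cwAngle L p} ⊆
      {x ∈ s.erase L' | cwAngle L' x < cwAngle L' p} := by
    intro x hx
    simp only [mem_filter, mem_erase] at hx ⊢
    obtain ⟨⟨-, hxs⟩, hxp⟩ := hx
    have hx := cwAngle_eq_of_lt (hxp.trans hpL')
    refine ⟨⟨by rintro rfl; exact (hxp.trans hpL').false, hxs⟩, ?_⟩
    linarith
  have hL'L : L' ≠ L := by
    rintro rfl; rw [cwAngle_self] at hpL'; linarith
  refine card_lt_card ((ssubset_iff_of_subset hsub).2 ⟨L, ?_, by simp⟩)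
  have hLL' := cwAngle_eq_of_lt (a := L) (b := L') (x := L) (by rw [cwAngle_self]; linarith)
  simp only [mem_filter, mem_erase, cwAngle_self] at hLL' ⊢
  exact ⟨⟨hL'L.symm, hL⟩, by linarith⟩

theorem new_leader_in_arc_of_insert_general
    (s : Finset ℝ) (hcirc : OnCircle s)
    (L : ℝ) (hL : IsTrueLeader s L)
    (p : ℝ) (hp : p ∉ s) (hp0 : 0 ≤ p) (hp2 : p < 2 * π) :
    ∀ L' : ℝ, IsTrueLeader (insert p s) L' → cwAngle L L' ≤ cwAngle L p := by
  intro L' hL'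
  by_contra! hpL'
  have hcirc' : OnCircle (insert p s) := by
    simpa [OnCircle, hp0, hp2] using hcirc
  have hLp : 0 < cwAngle L p := by
    refine (cwAngle_mem_Ico L p).1.lt_of_ne fun h => hp ?_
    have hpL : p = L := hcirc'.injOn_cwAngle L (mem_insert_self p s)
      (mem_insert_of_mem hL.1) (by rw [cwAngle_self, h])
    exact hpL ▸ hL.1
  have hL's : L' ∈ s := (mem_insert.1 hL'.1).resolve_left (by rintro rfl; exact hpL'.false)
  have hL'L : L' ≠ L := by
    rintro rfl; rw [cwAngle_self] at hpL'; linarith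
  have hold := lt_cwDists_of_isTrueLeader hcirc hL hL's hL'L
  have hnew := lt_cwDists_of_isTrueLeader hcirc' hL' (mem_insert_of_mem hL.1) hL'L.symm
  rw [cwDists_insert hcirc' hp hL.1, cwDists_insert hcirc' hp hL's] at hnew
  refine lt_asymm hnew (orderedInsert_lt_orderedInsert_of_countP_lt (pairwise_cwDists s L')
    (by rw [length_cwDists hcirc hL.1, length_cwDists hcirc hL's]) hold ?_
    (cwAngle_notMem_cwDists hcirc' hp L))
  rw [countP_cwDists_lt hcirc, countP_cwDists_lt hcirc]
  exact card_filter_cwAngle_lt_lt hL.1 hLp hpL'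

/-- inserting a new point `p` into a rotationally asymmetric
configuration with true leader `L` (keeping asymmetry) forces the new true leader
to lie on the closed clockwise arc from `L` to `p`. -/
theorem new_leader_in_arc_of_insert
    (s : Finset ℝ) (hcirc : OnCircle s) (hasym : RotAsym s)
    (L : ℝ) (hL : IsTrueLeader s L)
    (p : ℝ) (hp : p ∉ s) (hp0 : 0 ≤ p) (hp2 : p < 2 * π)
    (hasym' : RotAsym (insert p s)) :
    ∀ L' : ℝ, IsTrueLeader (insert p s) L' → cwAngle L L' ≤ cwAngle L p :=
  new_leader_in_arc_of_insert_general s hcirc L hL p hp hp0 hp2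
end

section
/- In a rotationally asymmetric configuration of distinct points on a circle, if a point r other than the true leader is a confused leader, then the antipodal position of r is occupied by a point of the configuration. -/
open Real

/-!
Compare points by their sets of clockwise distances to the other points: the gap sequence of `r`
is lexicographically smaller than that of `x` iff the least element of the symmetric difference
of the two distance sets lies in the set of `r`.

Suppose the antipode `a` of `r` is empty. Then `C₀(r)` is the actual configuration, whose leader
is not `r`, so `r` leads `C₁(r) = s ∪ {a}`. Deleting `a` removes the distance `π` from the set of
`r` and one distance `e` from the set of any other point `x`, where `x + e = r + π`. For a leader
`r`, the first difference with `x` comes before the clockwise distance `τ` from `x` to `r`; as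
`e ≡ τ + π`, the first difference or `e` lies below `π`, so `r` still beats `x` after the
deletion. Hence `r` leads `s` as well, contradicting the uniqueness of the leader.
-/

open Set

section SetLex

variable {α : Type*} [LinearOrder α]

def FirstDiff (A B : Set α) (m : α) : Prop :=
  m ∈ A ∧ m ∉ B ∧ ∀ v < m, v ∈ A ↔ v ∈ B

def SetLexLt (A B : Set α) : Prop := ∃ m, FirstDiff A B m

theorem SetLexLt.asymm {A B : Set α} (h : SetLexLt A B) : ¬ SetLexLt B A := by
  rintro ⟨m', hm'B, hm'A, hbelow'⟩
  obtain ⟨m, hmA, hmB, hbelow⟩ := h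
  rcases lt_trichotomy m m' with hlt | rfl | hgt
  · exact hmB ((hbelow' m hlt).mpr hmA)
  · exact hm'A hmA
  · exact hm'A ((hbelow m' hgt).mpr hm'B)

theorem setLexLt_of_forall_lt {A B : Set α} {a : α} (ha : a ∈ A) (hA : ∀ v ∈ A, a ≤ v)
    (hB : ∀ v ∈ B, a < v) : SetLexLt A B :=
  ⟨a, ha, fun h => (hB a h).false, fun v hv =>
    iff_of_false (fun h => (hA v h).not_gt hv) fun h => (hB v h).asymm hv⟩

theorem setLexLt_insert_insert_iff {A B : Set α} {a : α} (hA : a ∉ A) (hB : a ∉ B) :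
    SetLexLt (insert a A) (insert a B) ↔ SetLexLt A B := by
  constructor
  · rintro ⟨m, hmA, hmB, hbelow⟩
    have hma : m ≠ a := fun h => hmB (h ▸ mem_insert a B)
    refine ⟨m, (mem_insert_iff.mp hmA).resolve_left hma, fun h => hmB (mem_insert_of_mem a h),
      fun v hv => ?_⟩
    by_cases hva : v = a
    · subst hva; exact iff_of_false hA hB
    · simpa [hva] using hbelow v hv
  · rintro ⟨m, hmA, hmB, hbelow⟩
    have hma : m ≠ a := fun h => hA (h ▸ hmA)
    refine ⟨m, mem_insert_of_mem a hmA, by simp [hma, hmB], fun v hv => ?_⟩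
    by_cases hva : v = a
    · simp [hva]
    · simpa [hva] using hbelow v hv

theorem FirstDiff.setLexLt_diff_singleton {A B : Set α} {m p q : α} (hm : FirstDiff A B m)
    (hq : q ∈ B) (hlt : min m q < p) : SetLexLt (A \ {p}) (B \ {q}) := by
  obtain ⟨hmA, hmB, hbelow⟩ := hm
  have hbelow' : ∀ v < min m q, v ∈ A \ {p} ↔ v ∈ B \ {q} := fun v hv => by
    simp only [mem_sdiff, mem_singleton_iff, hbelow v (hv.trans_le (min_le_left m q)),
      ne_of_lt (hv.trans hlt), ne_of_lt (hv.trans_le (min_le_right m q))]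
  rcases lt_or_gt_of_ne (fun h : m = q => hmB (h ▸ hq)) with hmq | hqm
  · rw [min_eq_left hmq.le] at hlt hbelow'
    exact ⟨m, ⟨hmA, hlt.ne⟩, fun h => hmB h.1, hbelow'⟩
  · rw [min_eq_right hqm.le] at hlt hbelow'
    exact ⟨q, ⟨(hbelow q hqm).mpr hq, hlt.ne⟩, fun h => h.2 rfl, hbelow'⟩

theorem head_le_of_pairwise {a : α} {l : List α} (h : (a :: l).Pairwise (· < ·)) :
    ∀ v ∈ a :: l, a ≤ v := by
  simp only [List.mem_cons, forall_eq_or_imp, le_refl, true_and]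
  exact fun v hv => (List.rel_of_pairwise_cons h hv).le

-- The common last entry `c` excludes the prefix case of `List.Lex`, which has no counterpart
-- for sets.
theorem lex_append_singleton_iff_setLexLt {c : α} :
    ∀ {l₁ l₂ : List α}, l₁.Pairwise (· < ·) → l₂.Pairwise (· < ·) →
      (∀ v ∈ l₁, v < c) → (∀ v ∈ l₂, v < c) →
      (List.Lex (· < ·) (l₁ ++ [c]) (l₂ ++ [c]) ↔ SetLexLt {v | v ∈ l₁} {v | v ∈ l₂})
  | [], [], _, _, _, _ => by simp [SetLexLt, FirstDiff]
  | [], b :: t, _, _, _, h₂ => by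
    have := h₂ b List.mem_cons_self
    simp [List.cons_lex_cons_iff, SetLexLt, FirstDiff, this.not_gt, this.ne']
  | a :: t, [], s₁, _, h₁, _ => by
    refine iff_of_true (List.Lex.rel (h₁ a List.mem_cons_self)) ?_
    exact setLexLt_of_forall_lt List.mem_cons_self (head_le_of_pairwise s₁) (by simp)
  | a :: t₁, b :: t₂, s₁, s₂, h₁, h₂ => by
    have ha := head_le_of_pairwise s₁
    have hb := head_le_of_pairwise s₂
    rcases lt_trichotomy a b with hab | rfl | hab
    · exact iff_of_true (List.Lex.rel hab)
        (setLexLt_of_forall_lt List.mem_cons_self ha fun v hv => hab.trans_le (hb v hv))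
    · rw [List.pairwise_cons] at s₁ s₂
      have hmem : ∀ x (l : List α), {v | v ∈ x :: l} = insert x {v | v ∈ l} := fun x l => by
        ext; simp
      rw [List.cons_append, List.cons_append, List.lex_cons_iff, hmem, hmem,
        setLexLt_insert_insert_iff (A := {v | v ∈ t₁}) (B := {v | v ∈ t₂})
          (fun h => (s₁.1 a h).false) (fun h => (s₂.1 a h).false)]
      exact lex_append_singleton_iff_setLexLt s₁.2 s₂.2 (fun v hv => h₁ v (by simp [hv]))
        (fun v hv => h₂ v (by simp [hv]))
    · refine iff_of_false ?_ (setLexLt_of_forall_lt (A := {v | v ∈ b :: t₂})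
        List.mem_cons_self hb fun v hv => hab.trans_le (ha v hv)).asymm
      simp [List.cons_lex_cons_iff, hab.not_gt, hab.ne']

theorem lex_sort_append_singleton_iff {A B : Finset α} {c : α}
    (hA : ∀ v ∈ A, v < c) (hB : ∀ v ∈ B, v < c) :
    List.Lex (· < ·) (A.sort (· ≤ ·) ++ [c]) (B.sort (· ≤ ·) ++ [c]) ↔ SetLexLt (A : Set α) B := by
  have hset : ∀ C : Finset α, {v | v ∈ C.sort (· ≤ ·)} = (C : Set α) := fun C => by
    ext; simp
  rw [lex_append_singleton_iff_setLexLt (List.sortedLT_iff_pairwise.mp (Finset.sortedLT_sort A))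
    (List.sortedLT_iff_pairwise.mp (Finset.sortedLT_sort B)) (by simpa using hA)
    (by simpa using hB), hset, hset]

end SetLex

theorem lex_zipWith_sub_iff {α : Type*} [AddCommGroup α] [LinearOrder α]
    [IsOrderedAddMonoid α] :
    ∀ (u₁ u₂ : List α) (b : α), List.Lex (· < ·) (List.zipWith (· - ·) u₁ (b :: u₁))
      (List.zipWith (· - ·) u₂ (b :: u₂)) ↔ List.Lex (· < ·) u₁ u₂
  | [], [], _ => by simp
  | [], _ :: _, _ => by simp
  | _ :: _, [], _ => by simp
  | x :: u₁, y :: u₂, b => by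
    simp only [List.zipWith_cons_cons, List.cons_lex_cons_iff, sub_lt_sub_iff_right,
      sub_left_inj]
    exact or_congr_right (and_congr_right fun h => h ▸ lex_zipWith_sub_iff u₁ u₂ x)

theorem zipWith_append_singleton_cons {α : Type*} (f : α → α → α) (l : List α) (b c : α) :
    List.zipWith f (l ++ [c]) (b :: l) = List.zipWith f (l ++ [c]) (b :: (l ++ [c])) := by
  simpa using (List.zipWith_append (f := f) (l₁ := l ++ [c]) (l₁' := []) (l₂ := b :: l)
    (l₂' := [c]) (by simp)).symm

namespace AddCircle

variable {p : ℝ} [hp : Fact (0 < p)]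

theorem coe_eq_coe_iff_of_mem_Ico_zero {x y : ℝ} (hx : x ∈ Ico 0 p) (hy : y ∈ Ico 0 p) :
    (x : AddCircle p) = y ↔ x = y :=
  coe_eq_coe_iff_of_mem_Ico (by rwa [zero_add]) (by rwa [zero_add])

theorem coe_ne_zero_of_mem_Ioo {v : ℝ} (hv : v ∈ Ioo 0 p) : (v : AddCircle p) ≠ 0 :=
  fun h => hv.1.ne' ((coe_eq_zero_iff_of_mem_Ico (Ioo_subset_Ico_self hv)).mp h)

def cwDists (P : Set (AddCircle p)) (z : AddCircle p) : Set ℝ :=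
  {v | v ∈ Ioo 0 p ∧ z + v ∈ P}

def IsLexLeader (P : Set (AddCircle p)) (r : AddCircle p) : Prop :=
  ∀ x ∈ P, x ≠ r → SetLexLt (cwDists P r) (cwDists P x)

theorem cwDists_insert_diff_singleton {P : Set (AddCircle p)} {z a : AddCircle p} {e : ℝ}
    (ha : a ∉ P) (he : e ∈ Ico 0 p) (hze : z + e = a) :
    cwDists (insert a P) z \ {e} = cwDists P z := by
  ext v
  simp only [cwDists, mem_sdiff, mem_ofPred_eq, mem_insert_iff, mem_singleton_iff]
  constructor
  · rintro ⟨⟨hv, rfl | hvP⟩, hve⟩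
    · rw [add_right_inj, coe_eq_coe_iff_of_mem_Ico_zero he (Ioo_subset_Ico_self hv)] at hze
      exact absurd hze.symm hve
    · exact ⟨hv, hvP⟩
  · rintro ⟨hv, hvP⟩
    exact ⟨⟨hv, Or.inr hvP⟩, by rintro rfl; exact ha (hze ▸ hvP)⟩

-- Otherwise `y = r + τ` is a point, and as `x + τ = r`, the first difference `m₁` between `r`
-- and `y` yields the earlier difference `τ + m₁` between `r` and `x`.
theorem IsLexLeader.lt_of_firstDiff {P : Set (AddCircle p)} {r x : AddCircle p} {m τ : ℝ}
    (h : IsLexLeader P r) (hr : r ∈ P) (hm : FirstDiff (cwDists P r) (cwDists P x) m)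
    (hτ : τ ∈ Ioo 0 p) (hxτ : x + τ = r) : m < τ := by
  obtain ⟨⟨hmp, hmP⟩, hmx, hbelow⟩ := hm
  have hτx : τ ∈ cwDists P x := ⟨hτ, hxτ ▸ hr⟩
  refine lt_of_le_of_ne (not_lt.mp fun hτm => ?_) fun h => hmx (h ▸ hτx)
  obtain ⟨-, hyP⟩ := (hbelow τ hτm).mpr hτx
  have hyr : r + τ ≠ r := fun h => coe_ne_zero_of_mem_Ioo hτ (by simpa using h)
  obtain ⟨m₁, ⟨hm₁p, hm₁P⟩, hm₁y, hbelow₁⟩ := h _ hyP hyr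
  have hσy : m - τ ∈ cwDists P (r + τ) :=
    ⟨⟨by linarith, by linarith [hmp.2, hτ.1]⟩, by simpa using hmP⟩
  have hσr : m - τ ∉ cwDists P r := fun hσ => hmx ⟨hmp, by
    rw [← hxτ] at hσ
    simpa [add_assoc] using hσ.2⟩
  have hm₁σ : m₁ < m - τ := lt_of_le_of_ne (not_lt.mp fun h => hσr ((hbelow₁ _ h).mpr hσy))
    fun h => hσr (h ▸ ⟨hm₁p, hm₁P⟩)
  have hx : τ + m₁ ∈ cwDists P x :=
    ⟨⟨by linarith [hm₁p.1, hτ.1], by linarith [hmp.2]⟩, by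
      rw [← hxτ] at hm₁P
      simpa [add_assoc] using hm₁P⟩
  obtain ⟨-, hrP⟩ := (hbelow _ (by linarith)).mpr hx
  exact hm₁y ⟨hm₁p, by simpa [add_assoc] using hrP⟩

theorem IsLexLeader.of_insert_add_half {P : Set (AddCircle p)} {r : AddCircle p}
    (h : IsLexLeader (insert (r + ↑(p / 2)) P) r) (hr : r ∈ P) (ha : r + ↑(p / 2) ∉ P) :
    IsLexLeader P r := by
  have hp0 := hp.out
  intro x hx hxr
  obtain ⟨τ, hτ, hxτ⟩ := eq_coe_Ico (r - x)
  rw [eq_sub_iff_add_eq'] at hxτ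
  have hτ0 : τ ≠ 0 := by rintro rfl; simp [← hxτ] at hxr
  obtain ⟨m, hm⟩ := h x (mem_insert_of_mem _ hx) hxr
  have hmτ := h.lt_of_firstDiff (mem_insert_of_mem _ hr) hm ⟨lt_of_le_of_ne hτ.1 hτ0.symm, hτ.2⟩
    hxτ
  obtain ⟨e, he, hxe, hmin⟩ : ∃ e ∈ Ico 0 p, x + e = r + ↑(p / 2) ∧ min m e < p / 2 := by
    rcases lt_or_ge τ (p / 2) with hτp | hτp
    · refine ⟨τ + p / 2, ⟨by linarith [hτ.1], by linarith⟩, by rw [← hxτ, coe_add, add_assoc], ?_⟩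
      exact (min_le_left _ _).trans_lt (hmτ.trans hτp)
    · refine ⟨τ - p / 2, ⟨by linarith, by linarith [hτ.2]⟩, ?_, ?_⟩
      · rw [← hxτ, show τ - p / 2 = τ + p / 2 - p by ring, coe_sub, coe_period, sub_zero,
          coe_add, add_assoc]
      · exact (min_le_right _ _).trans_lt (by linarith [hτ.2])
  have he0 : e ≠ 0 := by rintro rfl; exact ha (by simpa [← hxe] using hx)
  rw [← cwDists_insert_diff_singleton ha ⟨by linarith, by linarith⟩ rfl,
    ← cwDists_insert_diff_singleton ha he hxe]
  exact hm.setLexLt_diff_singleton ⟨⟨lt_of_le_of_ne he.1 he0.symm, he.2⟩, by simp [hxe]⟩ hmin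

end AddCircle

theorem norm2pi_eq_toIcoMod (x : ℝ) : norm2pi x = toIcoMod two_pi_pos 0 x := by
  rw [norm2pi, toIcoMod_eq_fract_mul, mul_comm]

theorem norm2pi_mem_Ico (x : ℝ) : norm2pi x ∈ Ico 0 (2 * π) := by
  rw [norm2pi_eq_toIcoMod]
  exact toIcoMod_mem_Ico' _ _

instance : Fact (0 < 2 * π) := ⟨two_pi_pos⟩

theorem coe_norm2pi (x : ℝ) : ((norm2pi x : ℝ) : AddCircle (2 * π)) = x := by
  rw [norm2pi_eq_toIcoMod, ← sub_eq_zero, ← AddCircle.coe_sub, ← neg_sub, self_sub_toIcoMod,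
    AddCircle.coe_neg, AddCircle.coe_zsmul, AddCircle.coe_period, smul_zero, neg_zero]

def circlePoints (s : Finset ℝ) : Set (AddCircle (2 * π)) :=
  (fun x : ℝ => (x : AddCircle (2 * π))) '' s

theorem coe_image_cwAngle_erase {s : Finset ℝ} (hs : OnCircle s) {z : ℝ}
    (hz : z ∈ Ico 0 (2 * π)) :
    ((s.erase z).image (cwAngle z) : Set ℝ) = AddCircle.cwDists (circlePoints s) z := by
  ext v
  simp only [Finset.coe_image, Finset.coe_erase, mem_image, mem_sdiff, mem_singleton_iff,
    AddCircle.cwDists, circlePoints, mem_ofPred_eq, Finset.mem_coe]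
  constructor
  · rintro ⟨u, ⟨hu, huz⟩, rfl⟩
    refine ⟨⟨lt_of_le_of_ne (norm2pi_mem_Ico _).1 fun h => huz ?_, (norm2pi_mem_Ico _).2⟩,
      u, hu, ?_⟩
    · rw [← AddCircle.coe_eq_coe_iff_of_mem_Ico_zero (hs u hu) hz, ← sub_eq_zero,
        ← AddCircle.coe_sub, ← coe_norm2pi, ← cwAngle, ← h, AddCircle.coe_zero]
    · rw [cwAngle, coe_norm2pi, AddCircle.coe_sub, add_sub_cancel]
  · rintro ⟨hv, u, hu, hzu⟩
    refine ⟨u, ⟨hu, ?_⟩, ?_⟩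
    · rintro rfl
      exact AddCircle.coe_ne_zero_of_mem_Ioo hv (by simpa using hzu)
    · rw [cwAngle, ← AddCircle.coe_eq_coe_iff_of_mem_Ico_zero (norm2pi_mem_Ico _)
        (Ioo_subset_Ico_self hv), coe_norm2pi, AddCircle.coe_sub, hzu, add_sub_cancel_left]

theorem listLexLt_angleSeq_iff {s : Finset ℝ} (hs : OnCircle s) {z z' : ℝ}
    (hz : z ∈ Ico 0 (2 * π)) (hz' : z' ∈ Ico 0 (2 * π)) :
    ListLexLt (angleSeq s z) (angleSeq s z') ↔
      SetLexLt (AddCircle.cwDists (circlePoints s) z) (AddCircle.cwDists (circlePoints s) z') := by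
  have hlt : ∀ y, ∀ v ∈ (s.erase y).image (cwAngle y), v < 2 * π := by
    simp only [Finset.mem_image]
    rintro y _ ⟨u, -, rfl⟩
    exact (norm2pi_mem_Ico _).2
  dsimp only [ListLexLt, angleSeq]
  rw [zipWith_append_singleton_cons, zipWith_append_singleton_cons, lex_zipWith_sub_iff,
    lex_sort_append_singleton_iff (hlt z) (hlt z'), coe_image_cwAngle_erase hs hz,
    coe_image_cwAngle_erase hs hz']

theorem isTrueLeader_iff_isLexLeader {s : Finset ℝ} (hs : OnCircle s) {r : ℝ} :
    IsTrueLeader s r ↔ r ∈ s ∧ AddCircle.IsLexLeader (circlePoints s) r := by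
  refine and_congr_right fun hr => ?_
  rw [AddCircle.IsLexLeader, circlePoints, Set.forall_mem_image]
  refine forall₂_congr fun x hx => ?_
  simp only [ne_eq]
  rw [AddCircle.coe_eq_coe_iff_of_mem_Ico_zero (hs x hx) (hs r hr),
    listLexLt_angleSeq_iff hs (hs r hr) (hs x hx)]
  rfl

theorem IsTrueLeader.of_insert_antip {s : Finset ℝ} (hs : OnCircle s) {r : ℝ} (hr : r ∈ s)
    (ha : antip r ∉ s) (h : IsTrueLeader (insert (antip r) s) r) : IsTrueLeader s r := by
  have hs' : OnCircle (insert (antip r) s) := by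
    intro x hx
    rcases Finset.mem_insert.mp hx with rfl | hx
    exacts [norm2pi_mem_Ico _, hs x hx]
  have hcoe : ((antip r : ℝ) : AddCircle (2 * π)) = r + ↑(2 * π / 2) := by
    rw [antip, coe_norm2pi, AddCircle.coe_add, mul_div_cancel_left₀ π two_ne_zero]
  have hpts : circlePoints (insert (antip r) s) =
      insert ((r : AddCircle (2 * π)) + ↑(2 * π / 2)) (circlePoints s) := by
    rw [circlePoints, Finset.coe_insert, Set.image_insert_eq, hcoe]
    rfl
  rw [isTrueLeader_iff_isLexLeader hs', hpts] at h
  refine (isTrueLeader_iff_isLexLeader hs).mpr ⟨hr, h.2.of_insert_add_half ⟨r, hr, rfl⟩ ?_⟩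
  rintro ⟨x, hx, hxa⟩
  rw [← hcoe] at hxa
  have hxa' : x = antip r :=
    (AddCircle.coe_eq_coe_iff_of_mem_Ico_zero (hs x hx) (norm2pi_mem_Ico _)).mp hxa
  exact ha (hxa' ▸ hx)

theorem IsTrueLeader.eq {s : Finset ℝ} {r L : ℝ} (hr : IsTrueLeader s r)
    (hL : IsTrueLeader s L) : r = L := by
  by_contra h
  exact List.lex_asymm (fun h₁ h₂ => lt_asymm h₁ h₂) (hr.2 L hL.1 (Ne.symm h)) (hL.2 r hr.1 h)

theorem non_leader_confused_antipode_occupied_general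
    (s : Finset ℝ) (hcirc : OnCircle s)
    (L : ℝ) (hL : IsTrueLeader s L)
    (r : ℝ) (hrL : r ≠ L) (hconf : ConfusedLeader s r) :
    antip r ∈ s := by
  by_contra ha
  obtain ⟨hr, -, -, hxor⟩ := hconf
  have hlead : IsTrueLeader s r := by
    rcases hxor with ⟨h₀, -⟩ | ⟨h₁, -⟩
    · rwa [confC0, Finset.erase_eq_of_notMem ha] at h₀
    · exact h₁.of_insert_antip hcirc hr ha
  exact hrL (hlead.eq hL)

/-- if a point other than the true leader is a confused leader then its
antipodal position is occupied. -/
theorem non_leader_confused_antipode_occupied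
    (s : Finset ℝ) (hcirc : OnCircle s) (hasym : RotAsym s)
    (L : ℝ) (hL : IsTrueLeader s L)
    (r : ℝ) (hrL : r ≠ L) (hconf : ConfusedLeader s r) :
    antip r ∈ s :=
  non_leader_confused_antipode_occupied_general s hcirc L hL r hrL hconf
end
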